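/- Let U ⊆ S^m_d be a quasi-stable monomial module, let r(U) be the maximal degree of an element of its Pommaret basis P(U), and let G be a P(U)-marked set. Then G is a P(U)-marked basis if and only if N(U,⟨G⟩)_s = {0} for every degree s ≤ r(U) + 1, which in turn holds if and only if ⟨G⟩_s = ⟨G^{(s)}⟩^A for every s ≤ r(U) + 1. -/

import Mathlib

/-!
Every term of `U` lies in exactly one Pommaret cone `x^δ · x^α e_k`, and every term of the tail
of `x^δ f_α` that lies in `U` sits in a cone whose multiplier is lex-smaller than `δ`.
Well-founded induction along the lexicographic order therefore gives
`(S^m_d)_s = ⟨G^(s)⟩^A + ⟨N(U)_s⟩^A` in every degree, and comparing the head term with the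
lex-largest multiplier shows that `⟨G^(s)⟩^A ∩ ⟨N(U)_s⟩^A = 0`. Hence `G` is a marked basis as
soon as `⟨G⟩_s = ⟨G^(s)⟩^A` for all `s`.

For that it suffices to write every non-multiplicative prolongation `x_i f_α` as a combination of
multiplicative multiples `x^δ f_β` with `δ` in the variables smaller than `x_i`: then any
`x^γ f_α` can be rewritten with lex-smaller multipliers until all of them are multiplicative.
Reducing `x_i f_α` by `G` leaves a remainder in `N(U, ⟨G⟩)` of degree at most `r(U) + 1`, which
is exactly what the vanishing hypothesis kills.
-/

open MvPolynomial

namespace MB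

/-- Exponent (multi-index) of a term in the variables `x_0, …, x_n`. -/
abbrev Exp (n : ℕ) := Fin (n+1) →₀ ℕ

variable {n : ℕ}

/-- Total degree of a term. -/
def degE (α : Exp n) : ℕ := α.sum fun _ e => e

/-- `x_i` is a multiplicative variable for the term `x^α`, i.e. `x_i ≤ min(x^α)`. -/
def mult (α : Exp n) (i : Fin (n+1)) : Prop := ∀ j ∈ α.support, i ≤ j

/-- Every variable occurring in `x^δ` is multiplicative for `x^α`. -/
def multExp (α δ : Exp n) : Prop := ∀ i ∈ δ.support, mult α i

/-- Pommaret cone of a term. -/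
def pommaretCone (α : Exp n) : Set (Exp n) := {γ | ∃ δ, multExp α δ ∧ γ = α + δ}

/-- A set of terms is (the set of terms of) a monomial ideal. -/
def IsMonomialIdeal (T : Set (Exp n)) : Prop := ∀ α ∈ T, ∀ β, α + β ∈ T

/-- `P` is a Pommaret basis of the set of terms `T`: the terms of `T` are the
disjoint union of the Pommaret cones of the elements of `P`. -/
def IsPommaretBasis (P : Finset (Exp n)) (T : Set (Exp n)) : Prop :=
  (∀ γ, γ ∈ T ↔ ∃ α ∈ P, γ ∈ pommaretCone α) ∧
  ∀ γ : Exp n, ∀ α ∈ P, ∀ β ∈ P, γ ∈ pommaretCone α → γ ∈ pommaretCone β → α = β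

/-- Lexicographic order on terms (with `x_n > … > x_0` significance). -/
def lexLt (η δ : Exp n) : Prop := ∃ i, η i < δ i ∧ ∀ j, i < j → η j = δ j

/-- Terms of the saturation `(J : (x_0,…,x_n)^∞)` of a monomial ideal. -/
def satTerms (T : Set (Exp n)) : Set (Exp n) :=
  {α | ∃ j : ℕ, ∀ β : Exp n, degE β = j → α + β ∈ T}

section ModuleDefs

variable (A : Type*) [CommRing A] {κ : Type*} [Fintype κ] [DecidableEq κ]

/-- The term `x^α e_k` of the free module. -/
noncomputable def termV (α : Exp n) (k : κ) : κ → MvPolynomial (Fin (n+1)) A :=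
  Pi.single k (monomial α 1)

variable {A}

/-- Homogeneity of degree `s` in `S^m_d` (with weight vector `d`). -/
def IsHomogV (d : κ → ℤ) (f : κ → MvPolynomial (Fin (n+1)) A) (s : ℤ) : Prop :=
  ∀ k, ∀ β ∈ (f k).support, (degE β : ℤ) + d k = s

variable (A)

/-- The degree-`s` component `(S^m_d)_s` as an `A`-submodule. -/
noncomputable def homogCompV (d : κ → ℤ) (s : ℤ) :
    Submodule A (κ → MvPolynomial (Fin (n+1)) A) where
  carrier := {f | IsHomogV d f s}
  add_mem' := by
    intro f g hf hg k β hβ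
    rcases Finset.mem_union.mp (MvPolynomial.support_add hβ) with h | h
    · exact hf k β h
    · exact hg k β h
  zero_mem' := by intro k β hβ; simp at hβ
  smul_mem' := by
    intro a f hf k β hβ
    exact hf k β (MvPolynomial.support_smul hβ)

/-- The set `N(U)` of terms of `S^m_d` not belonging to the monomial module `U = ⊕ J^(k) e_k`. -/
def NUTerms (J : κ → Set (Exp n)) : Set (κ → MvPolynomial (Fin (n+1)) A) :=
  {v | ∃ k, ∃ α, α ∉ J k ∧ v = termV A α k}

/-- The degree-`s` part `N(U)_s`. -/
def NUTermsDeg (d : κ → ℤ) (J : κ → Set (Exp n)) (s : ℤ) :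
    Set (κ → MvPolynomial (Fin (n+1)) A) :=
  {v | ∃ k, ∃ α, α ∉ J k ∧ (degE α : ℤ) + d k = s ∧ v = termV A α k}

variable {A}

/-- A `P(U)`-marked set: for each `x^α e_k` with `α ∈ P k`, the element `g α k` has
head term `x^α e_k` (coefficient `1`) and all other terms in `N(U)` of the same degree. -/
def IsMarkedSetV (d : κ → ℤ) (J : κ → Set (Exp n)) (P : κ → Finset (Exp n))
    (g : Exp n → κ → (κ → MvPolynomial (Fin (n+1)) A)) : Prop :=
  ∀ k, ∀ α ∈ P k, ∀ l, ∀ β ∈ ((g α k - termV A α k) l).support,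
    β ∉ J l ∧ (degE β : ℤ) + d l = (degE α : ℤ) + d k

/-- The underlying set of elements of the marked set `G`. -/
def GSet (P : κ → Finset (Exp n)) (g : Exp n → κ → (κ → MvPolynomial (Fin (n+1)) A)) :
    Set (κ → MvPolynomial (Fin (n+1)) A) :=
  {v | ∃ k, ∃ α ∈ P k, v = g α k}

/-- The set `G^(s)` of multiplicative multiples of elements of `G` of degree `s`. -/
def GSdeg (d : κ → ℤ) (P : κ → Finset (Exp n))
    (g : Exp n → κ → (κ → MvPolynomial (Fin (n+1)) A)) (s : ℤ) :
    Set (κ → MvPolynomial (Fin (n+1)) A) :=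
  {v | ∃ k, ∃ α ∈ P k, ∃ δ : Exp n, multExp α δ ∧
    (degE δ : ℤ) + (degE α : ℤ) + d k = s ∧ v = (monomial δ (1:A)) • g α k}

/-- The `S`-submodule `⟨G⟩` generated by the marked set. -/
noncomputable def GmodS (P : κ → Finset (Exp n))
    (g : Exp n → κ → (κ → MvPolynomial (Fin (n+1)) A)) :
    Submodule (MvPolynomial (Fin (n+1)) A) (κ → MvPolynomial (Fin (n+1)) A) :=
  Submodule.span _ (GSet P g)

/-- The degree-`s` component `⟨G⟩_s` as an `A`-submodule. -/
noncomputable def GmodDeg (d : κ → ℤ) (P : κ → Finset (Exp n))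
    (g : Exp n → κ → (κ → MvPolynomial (Fin (n+1)) A)) (s : ℤ) :
    Submodule A (κ → MvPolynomial (Fin (n+1)) A) :=
  (GmodS P g).restrictScalars A ⊓ homogCompV A d s

/-- `G` is a marked basis: `(S^m_d)_s = ⟨G⟩_s ⊕ ⟨N(U)_s⟩^A` for every degree `s`. -/
def MarkedBasisProp (d : κ → ℤ) (J : κ → Set (Exp n)) (P : κ → Finset (Exp n))
    (g : Exp n → κ → (κ → MvPolynomial (Fin (n+1)) A)) : Prop :=
  ∀ s : ℤ,
    homogCompV A d s = GmodDeg d P g s ⊔ Submodule.span A (NUTermsDeg A d J s) ∧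
    GmodDeg d P g s ⊓ Submodule.span A (NUTermsDeg A d J s) = ⊥

/-- One step of the reduction relation `→_G`. -/
def RedStep (P : κ → Finset (Exp n)) (g : Exp n → κ → (κ → MvPolynomial (Fin (n+1)) A))
    (h h' : κ → MvPolynomial (Fin (n+1)) A) : Prop :=
  ∃ k, ∃ α ∈ P k, ∃ η : Exp n, multExp α η ∧
    (h k).coeff (η + α) ≠ 0 ∧
    h' = h - ((h k).coeff (η + α)) • ((monomial η (1:A)) • g α k)

end ModuleDefs

section IdealDefs

variable {A : Type*} [CommRing A]

/-- A `P(J)`-marked set of polynomials. -/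
def IsMarkedSetI (T : Set (Exp n)) (P : Finset (Exp n))
    (g : Exp n → MvPolynomial (Fin (n+1)) A) : Prop :=
  ∀ α ∈ P, ∀ β ∈ (g α - monomial α (1:A)).support, β ∉ T ∧ degE β = degE α

variable (A)

/-- The degree-`s` monomials not in `T`. -/
def NTermsDegI (T : Set (Exp n)) (s : ℕ) : Set (MvPolynomial (Fin (n+1)) A) :=
  {p | ∃ β, β ∉ T ∧ degE β = s ∧ p = monomial β (1:A)}

variable {A}

/-- Degree-`s` part of the ideal generated by the marked set. -/
noncomputable def IdealDegI (P : Finset (Exp n)) (g : Exp n → MvPolynomial (Fin (n+1)) A)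
    (s : ℕ) : Submodule A (MvPolynomial (Fin (n+1)) A) :=
  (Ideal.span (g '' ↑P)).restrictScalars A ⊓ homogeneousSubmodule (Fin (n+1)) A s

/-- A `P(J)`-marked basis of polynomials: `S_s = (G)_s ⊕ ⟨N(J)_s⟩^A` for all `s`. -/
def IsMarkedBasisI (T : Set (Exp n)) (P : Finset (Exp n))
    (g : Exp n → MvPolynomial (Fin (n+1)) A) : Prop :=
  IsMarkedSetI T P g ∧ ∀ s : ℕ,
    homogeneousSubmodule (Fin (n+1)) A s
      = IdealDegI P g s ⊔ Submodule.span A (NTermsDegI A T s) ∧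
    IdealDegI P g s ⊓ Submodule.span A (NTermsDegI A T s) = ⊥

/-- The polynomial `p` involves only multiplicative variables of `x^α`. -/
def multPoly (α : Exp n) (p : MvPolynomial (Fin (n+1)) A) : Prop :=
  ∀ β ∈ p.support, multExp α β

end IdealDefs

section SyzDefs

variable {A : Type*} [CommRing A]

/-- The map `(c_l) ↦ Σ_l c_l f_{α(l)}` whose kernel is `Syz(G)`. -/
noncomputable def syzMap (P : Finset (Exp n)) (g : Exp n → MvPolynomial (Fin (n+1)) A) :
    (↥P → MvPolynomial (Fin (n+1)) A) →ₗ[MvPolynomial (Fin (n+1)) A]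
      MvPolynomial (Fin (n+1)) A where
  toFun c := ∑ l : ↥P, c l * g l.1
  map_add' c c' := by simp [add_mul, Finset.sum_add_distrib]
  map_smul' a c := by simp [Finset.mul_sum, mul_assoc]

/-- Weight vector for the syzygy module: `d_l = deg x^{α(l)}`. -/
def ddeg (P : Finset (Exp n)) : ↥P → ℤ := fun l => (degE l.1 : ℤ)

/-- Terms of the monomial ideal generated by the nonmultiplicative variables of `x^{α(l)}`. -/
def Jsyz (P : Finset (Exp n)) : ↥P → Set (Exp n) :=
  fun l => {β | ∃ i ∈ β.support, ¬ mult (l : Exp n) i}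

open Classical in
/-- The claimed Pommaret basis `{x_i e_l : x_i nonmultiplicative for x^{α(l)}}`. -/
noncomputable def Psyz (P : Finset (Exp n)) : ↥P → Finset (Exp n) := fun l =>
  (Finset.univ.filter fun i : Fin (n+1) => ¬ mult (l : Exp n) i).image
    fun i => Finsupp.single i 1

open Classical in
/-- The syzygy `S_{k;i} = x_i e_k − Σ_l P_l^{k;i} e_l`. -/
noncomputable def Ssyz (P : Finset (Exp n))
    (Pc : ↥P → Fin (n+1) → ↥P → MvPolynomial (Fin (n+1)) A)
    (k : ↥P) (i : Fin (n+1)) : ↥P → MvPolynomial (Fin (n+1)) A :=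
  fun l => (if l = k then (X i : MvPolynomial (Fin (n+1)) A) else 0) - Pc k i l

/-- The set `G_Syz^(s)`. -/
def GSyzDeg (P : Finset (Exp n))
    (Pc : ↥P → Fin (n+1) → ↥P → MvPolynomial (Fin (n+1)) A) (s : ℤ) :
    Set (↥P → MvPolynomial (Fin (n+1)) A) :=
  {v | ∃ k : ↥P, ∃ i : Fin (n+1), ¬ mult (k : Exp n) i ∧ ∃ δ : Exp n,
    (∀ j ∈ δ.support, j ≤ i) ∧ (degE δ : ℤ) + 1 + ddeg P k = s ∧
    v = (monomial δ (1:A)) • Ssyz P Pc k i}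

end SyzDefs

lemma smul_mem_of_forall_mem_span {R S M : Type*} [Semiring R] [Monoid S] [AddCommMonoid M]
    [Module R M] [DistribMulAction S M] [SMulCommClass S R M] {W : Submodule R M} {s : Set M}
    (c : S) (h : ∀ v ∈ s, c • v ∈ W) {u : M} (hu : u ∈ Submodule.span R s) : c • u ∈ W := by
  induction hu using Submodule.span_induction with
  | mem v hv => exact h v hv
  | zero => simp
  | add x y _ _ hx hy => simpa [smul_add] using W.add_mem hx hy
  | smul a x _ hx => simpa [smul_comm c a x] using W.smul_mem a hx

lemma exists_of_mem_support_monomial_mul {σ R : Type*} [CommSemiring R] {δ γ : σ →₀ ℕ}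
    {p : MvPolynomial σ R} (h : γ ∈ (monomial δ (1 : R) * p).support) :
    ∃ β ∈ p.support, γ = δ + β := by
  rw [mem_support_iff, coeff_monomial_mul'] at h
  split_ifs at h with hle
  · exact ⟨γ - δ, mem_support_iff.2 (by simpa using h), (add_tsub_cancel_of_le hle).symm⟩
  · exact absurd rfl h

lemma span_range_monomial_one {σ R : Type*} [CommSemiring R] :
    Submodule.span R (Set.range fun γ : σ →₀ ℕ => monomial γ (1 : R)) = ⊤ := by
  rw [← coe_basisMonomials]
  exact (basisMonomials σ R).span_eq

section Exponents

lemma degE_add (a b : Exp n) : degE (a + b) = degE a + degE b := map_add Finsupp.degree a b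

lemma degE_single_one (i : Fin (n+1)) : degE (Finsupp.single i 1) = 1 := Finsupp.degree_single i 1

/-- Reversing the order of the variables turns `lexLt` into Mathlib's lexicographic order. -/
def lexKey (δ : Exp n) : Lex ((Fin (n+1))ᵒᵈ →₀ ℕ) := toLex δ

lemma lexLt_iff_lexKey_lt {η δ : Exp n} : lexLt η δ ↔ lexKey η < lexKey δ := by
  rw [lexLt, lexKey, lexKey, Finsupp.Lex.lt_iff]
  exact exists_congr fun i => and_comm

lemma lexLt_trans {a b c : Exp n} (hab : lexLt a b) (hbc : lexLt b c) : lexLt a c := by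
  rw [lexLt_iff_lexKey_lt] at *
  exact hab.trans hbc

lemma lexLt_irrefl (δ : Exp n) : ¬ lexLt δ δ := by
  rw [lexLt_iff_lexKey_lt]
  exact lt_irrefl _

lemma lexLt_trichotomy (η δ : Exp n) : lexLt η δ ∨ η = δ ∨ lexLt δ η := by
  simp only [lexLt_iff_lexKey_lt]
  exact lt_trichotomy (lexKey η) (lexKey δ)

lemma wellFounded_lexLt : WellFounded (lexLt (n := n)) := by
  have : (lexLt (n := n)) = InvImage (· < ·) lexKey := by
    funext η δ
    exact propext lexLt_iff_lexKey_lt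
  rw [this]
  exact InvImage.wf _ wellFounded_lt

lemma lexLt_add_left {a b : Exp n} (c : Exp n) (h : lexLt a b) : lexLt (c + a) (c + b) := by
  rw [lexLt_iff_lexKey_lt] at *
  exact add_lt_add_right h (lexKey c)

lemma lexLt_single_iff {δ : Exp n} {i : Fin (n+1)} :
    lexLt δ (Finsupp.single i 1) ↔ ∀ j, i ≤ j → δ j = 0 := by
  constructor
  · rintro ⟨t, ht, hagree⟩ j hij
    have hti : t = i := by
      by_contra h
      simp [Ne.symm h] at ht
    subst hti
    rcases hij.eq_or_lt with rfl | hlt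
    · simpa using ht
    · simpa [Finsupp.single_apply, hlt.ne] using hagree j hlt
  · intro h
    exact ⟨i, by simp [h i le_rfl], fun j hj => by simp [h j hj.le, hj.ne]⟩

lemma lexLt_add_single_zero (δ : Exp n) : lexLt δ (δ + Finsupp.single 0 1) := by
  simpa using lexLt_add_left δ ((lexLt_single_iff (δ := 0) (i := 0)).2 fun _ _ => rfl)

lemma degE_eq_of_add_eq {α δ α' δ' : Exp n} {a s : ℤ} (h : α + δ = α' + δ')
    (hdeg : (degE (α + δ) : ℤ) + a = s) : (degE δ' : ℤ) + degE α' + a = s := by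
  rw [h, degE_add] at hdeg
  push_cast at hdeg
  omega

end Exponents

section Pommaret

variable {T : Set (Exp n)} {P : Finset (Exp n)}

lemma multExp_zero (α : Exp n) : multExp α 0 := by
  intro i hi
  simp at hi

lemma IsPommaretBasis.add_mem (hPB : IsPommaretBasis P T) {α δ : Exp n} (hα : α ∈ P)
    (hmul : multExp α δ) : α + δ ∈ T :=
  (hPB.1 _).2 ⟨α, hα, δ, hmul, rfl⟩

lemma IsPommaretBasis.mem (hPB : IsPommaretBasis P T) {α : Exp n} (hα : α ∈ P) : α ∈ T := by
  simpa using hPB.add_mem hα (multExp_zero α)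

lemma IsPommaretBasis.eq_of_add_eq (hPB : IsPommaretBasis P T) {α β δ δ' : Exp n} (hα : α ∈ P)
    (hβ : β ∈ P) (hmα : multExp α δ) (hmβ : multExp β δ') (h : α + δ = β + δ') :
    α = β ∧ δ = δ' := by
  obtain rfl : α = β := hPB.2 (α + δ) α hα β hβ ⟨δ, hmα, rfl⟩ ⟨δ', hmβ, h⟩
  exact ⟨rfl, add_left_cancel h⟩

lemma IsPommaretBasis.lexLt_of_add_eq (hPB : IsPommaretBasis P T) {η δ α δ' : Exp n}
    (hη : η ∉ T) (hα : α ∈ P) (hmul : multExp α δ') (h : δ + η = α + δ') : lexLt δ' δ := by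
  have hcoord : ∀ j, δ j + η j = α j + δ' j := fun j => by simpa using DFunLike.congr_fun h j
  rcases lexLt_trichotomy δ' δ with hlt | rfl | ⟨i, hi, hagree⟩
  · exact hlt
  · exact absurd (add_left_cancel (h.trans (add_comm _ _)) ▸ hPB.mem hα) hη
  · exfalso
    have hiα : ∀ j ∈ α.support, i ≤ j := hmul i (Finsupp.mem_support_iff.2 (by omega))
    have hαη : α ≤ η := fun j => by
      rcases lt_trichotomy j i with hj | rfl | hj
      · have : α j = 0 := Finsupp.notMem_support_iff.1 fun hj' => (hiα j hj').not_gt hj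
        omega
      · have := hcoord j
        omega
      · have := hcoord j
        have := hagree j hj
        omega
    refine hη (add_tsub_cancel_of_le hαη ▸ hPB.add_mem hα fun j hj t ht => le_trans ?_ (hiα t ht))
    by_contra! hij
    have := hcoord j
    have := hagree j hij
    simp only [Finsupp.mem_support_iff, Finsupp.tsub_apply] at hj
    omega

lemma IsPommaretBasis.lexLt_single_of_add_eq (hPB : IsPommaretBasis P T) {α β δ : Exp n}
    {i : Fin (n+1)} (hα : α ∈ P) (hnm : ¬ mult α i) (hβ : β ∈ P) (hmul : multExp β δ)
    (h : Finsupp.single i 1 + α = β + δ) : lexLt δ (Finsupp.single i 1) := by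
  have hcoord : ∀ j, Finsupp.single i 1 j + α j = β j + δ j := fun j => by
    simpa using DFunLike.congr_fun h j
  rw [lexLt_single_iff]
  by_contra! hcon
  obtain ⟨j, hij, hj⟩ := hcon
  have hδi : 1 ≤ δ i := by
    rcases hij.eq_or_lt with rfl | hlt
    · omega
    · have hβi : β i = 0 := Finsupp.notMem_support_iff.1 fun hi =>
        (hmul j (Finsupp.mem_support_iff.2 hj) i hi).not_gt hlt
      have := hcoord i
      simp only [Finsupp.single_eq_same] at this
      omega
  obtain ⟨δ₀, rfl⟩ : ∃ δ₀, δ = δ₀ + Finsupp.single i 1 :=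
    ⟨_, (tsub_add_cancel_of_le (Finsupp.single_le_iff.2 hδi)).symm⟩
  have hα' : α + 0 = β + δ₀ := by
    rw [add_zero]
    exact add_left_cancel (h.trans (by abel))
  have hmul₀ : multExp β δ₀ := fun j hj => hmul j (by
    simp only [Finsupp.mem_support_iff, Finsupp.add_apply] at hj ⊢
    omega)
  obtain ⟨rfl, rfl⟩ := hPB.eq_of_add_eq hα hβ (multExp_zero α) hmul₀ hα'
  exact hnm (hmul i (by simp))

end Pommaret

section Terms

variable {A : Type*} [CommRing A] {κ : Type*}

local notation "V" => κ → MvPolynomial (Fin (n+1)) A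

noncomputable def coeffV (l : κ) (β : Exp n) : V →ₗ[A] A :=
  (lcoeff A β).comp (LinearMap.proj l)

lemma coeffV_apply (l : κ) (β : Exp n) (f : V) : coeffV l β f = coeff β (f l) := rfl

lemma monomial_smul_mem_homogCompV {d : κ → ℤ} {f : V} {t : ℤ} (hf : f ∈ homogCompV A d t)
    (δ : Exp n) : monomial δ (1 : A) • f ∈ homogCompV A d (degE δ + t) := by
  intro l γ hγ
  obtain ⟨β, hβ, rfl⟩ := exists_of_mem_support_monomial_mul hγ
  have := hf l β hβ
  rw [degE_add]
  push_cast
  omega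

variable [DecidableEq κ]

lemma coeff_termV (α β : Exp n) (k l : κ) :
    coeff β (termV A α k l) = if l = k ∧ β = α then 1 else 0 := by
  by_cases h : l = k
  · subst h
    simp [termV, coeff_monomial, eq_comm]
  · simp [termV, h]

lemma monomial_smul_termV (δ α : Exp n) (k : κ) :
    monomial δ (1 : A) • termV A α k = termV A (δ + α) k := by
  rw [termV, termV, ← Pi.single_smul', smul_eq_mul, monomial_mul, one_mul]

lemma mem_of_forall_termV_mem [Fintype κ] {W : Submodule A V} (f : V)
    (h : ∀ l, ∀ β ∈ (f l).support, termV A β l ∈ W) : f ∈ W := by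
  rw [← Finset.univ_sum_single f]
  refine W.sum_mem fun l _ => ?_
  rw [(f l).as_sum, ← LinearMap.single_apply A, map_sum]
  refine W.sum_mem fun β hβ => ?_
  rw [LinearMap.single_apply, ← mul_one (coeff β (f l)), ← smul_eq_mul, ← smul_monomial,
    Pi.single_smul']
  exact W.smul_mem _ (h l β hβ)

variable {d : κ → ℤ} {J : κ → Set (Exp n)} {P : κ → Finset (Exp n)}
  {g : Exp n → κ → κ → MvPolynomial (Fin (n+1)) A}

lemma termV_mem_homogCompV {α : Exp n} {k : κ} {s : ℤ} (h : (degE α : ℤ) + d k = s) :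
    termV A α k ∈ homogCompV A d s := by
  intro l β hβ
  rw [mem_support_iff, coeff_termV] at hβ
  obtain ⟨rfl, rfl⟩ := (ite_ne_right_iff.1 hβ).1
  exact h

lemma IsMarkedSetV.mem_homogCompV (hG : IsMarkedSetV d J P g) {α : Exp n} {k : κ}
    (hα : α ∈ P k) : g α k ∈ homogCompV A d (degE α + d k) := by
  rw [← sub_add_cancel (g α k) (termV A α k)]
  exact add_mem (fun l β hβ => (hG k α hα l β hβ).2) (termV_mem_homogCompV rfl)

lemma coeff_eq_zero_of_mem_span_NUTerms {x : V} (hx : x ∈ Submodule.span A (NUTerms A J))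
    {l : κ} {β : Exp n} (hβ : β ∈ J l) : coeff β (x l) = 0 := by
  have : Submodule.span A (NUTerms A J) ≤ LinearMap.ker (coeffV l β) := by
    rw [Submodule.span_le]
    rintro _ ⟨k, α, hα, rfl⟩
    simp only [SetLike.mem_coe, LinearMap.mem_ker, coeffV_apply, coeff_termV, ite_eq_right_iff]
    rintro ⟨rfl, rfl⟩
    exact (hα hβ).elim
  exact this hx

lemma span_NUTerms_inf_homogCompV [Fintype κ] (s : ℤ) :
    Submodule.span A (NUTerms A J) ⊓ homogCompV A d s = Submodule.span A (NUTermsDeg A d J s) := by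
  apply le_antisymm
  · rintro f ⟨hN, hf⟩
    refine mem_of_forall_termV_mem f fun l β hβ => Submodule.subset_span ⟨l, β, ?_, hf l β hβ, rfl⟩
    exact fun hJ => mem_support_iff.1 hβ (coeff_eq_zero_of_mem_span_NUTerms hN hJ)
  · rw [Submodule.span_le]
    rintro _ ⟨k, α, hα, hdeg, rfl⟩
    exact ⟨Submodule.subset_span ⟨k, α, hα, rfl⟩, termV_mem_homogCompV hdeg⟩

lemma span_NUTermsDeg_le_homogCompV [Fintype κ] (s : ℤ) :
    Submodule.span A (NUTermsDeg A d J s) ≤ homogCompV A d s :=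
  span_NUTerms_inf_homogCompV (A := A) (J := J) s ▸ inf_le_right

lemma span_NUTermsDeg_le_span_NUTerms [Fintype κ] (s : ℤ) :
    Submodule.span A (NUTermsDeg A d J s) ≤ Submodule.span A (NUTerms A J) :=
  span_NUTerms_inf_homogCompV (A := A) (d := d) s ▸ inf_le_left

lemma inf_span_NUTerms_inf_homogCompV [Fintype κ] (s : ℤ) :
    (GmodS P g).restrictScalars A ⊓ Submodule.span A (NUTerms A J) ⊓ homogCompV A d s
      = GmodDeg d P g s ⊓ Submodule.span A (NUTermsDeg A d J s) := by
  rw [inf_assoc, span_NUTerms_inf_homogCompV, GmodDeg, inf_assoc,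
    inf_eq_right.2 (span_NUTermsDeg_le_homogCompV s)]

lemma span_GSdeg_le_GmodDeg (hG : IsMarkedSetV d J P g) (s : ℤ) :
    Submodule.span A (GSdeg d P g s) ≤ GmodDeg d P g s := by
  rw [Submodule.span_le]
  rintro _ ⟨k, α, hα, δ, -, hdeg, rfl⟩
  refine ⟨(GmodS P g).smul_mem _ (Submodule.subset_span ⟨k, α, hα, rfl⟩), ?_⟩
  have := monomial_smul_mem_homogCompV (hG.mem_homogCompV hα) δ
  rwa [← add_assoc, hdeg] at this

end Terms

section Reduction

variable {A : Type*} [CommRing A] {κ : Type*} {d : κ → ℤ} {J : κ → Set (Exp n)}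
  {P : κ → Finset (Exp n)} {g : Exp n → κ → κ → MvPolynomial (Fin (n+1)) A}

def GSdegLT (d : κ → ℤ) (P : κ → Finset (Exp n))
    (g : Exp n → κ → κ → MvPolynomial (Fin (n+1)) A) (ε : Exp n) (s : ℤ) :
    Set (κ → MvPolynomial (Fin (n+1)) A) :=
  {v | ∃ k, ∃ α ∈ P k, ∃ δ : Exp n, multExp α δ ∧ lexLt δ ε ∧
    (degE δ : ℤ) + degE α + d k = s ∧ v = monomial δ (1 : A) • g α k}

lemma GSdegLT_subset_GSdeg {ε : Exp n} {s : ℤ} : GSdegLT d P g ε s ⊆ GSdeg d P g s := by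
  rintro _ ⟨k, α, hα, δ, hmul, -, hdeg, rfl⟩
  exact ⟨k, α, hα, δ, hmul, hdeg, rfl⟩

variable [DecidableEq κ]

/-- The elements of degree `s` that reduce into `⟨N(U)_s⟩^A` using only multipliers `δ <lex ε`. -/
noncomputable def reductionSpan (d : κ → ℤ) (J : κ → Set (Exp n)) (P : κ → Finset (Exp n))
    (g : Exp n → κ → κ → MvPolynomial (Fin (n+1)) A) (ε : Exp n) (s : ℤ) :
    Submodule A (κ → MvPolynomial (Fin (n+1)) A) :=
  Submodule.span A (GSdegLT d P g ε s) ⊔ Submodule.span A (NUTermsDeg A d J s)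

lemma reductionSpan_mono {ε ε' : Exp n} {s : ℤ} (h : lexLt ε ε') :
    reductionSpan d J P g ε s ≤ reductionSpan d J P g ε' s :=
  sup_le_sup_right (Submodule.span_mono <| by
    rintro _ ⟨k, α, hα, δ, hmul, hδ, hdeg, rfl⟩
    exact ⟨k, α, hα, δ, hmul, lexLt_trans hδ h, hdeg, rfl⟩) _

lemma reductionSpan_le {ε : Exp n} {s : ℤ} : reductionSpan d J P g ε s ≤
    Submodule.span A (GSdeg d P g s) ⊔ Submodule.span A (NUTermsDeg A d J s) :=
  sup_le_sup_right (Submodule.span_mono GSdegLT_subset_GSdeg) _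

lemma termV_add_eq (α δ : Exp n) (k : κ) : termV A (α + δ) k =
    monomial δ (1 : A) • g α k - monomial δ (1 : A) • (g α k - termV A α k) := by
  rw [smul_sub, sub_sub_cancel, monomial_smul_termV]
  congr 1
  exact add_comm α δ

variable [Fintype κ]

lemma monomial_smul_tail_mem_reductionSpan (hPB : ∀ k, IsPommaretBasis (P k) (J k))
    (hG : IsMarkedSetV d J P g) {η α : Exp n} {k : κ} {s : ℤ} (hα : α ∈ P k)
    (hdeg : (degE η : ℤ) + degE α + d k = s)
    (hcone : ∀ {l α' δ}, α' ∈ P l → multExp α' δ → lexLt δ η →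
      (degE δ : ℤ) + degE α' + d l = s → termV A (α' + δ) l ∈ reductionSpan d J P g η s) :
    monomial η (1 : A) • (g α k - termV A α k) ∈ reductionSpan d J P g η s := by
  refine mem_of_forall_termV_mem _ fun l γ hγ => ?_
  obtain ⟨β, hβ, rfl⟩ := exists_of_mem_support_monomial_mul hγ
  obtain ⟨hβJ, hβdeg⟩ := hG k α hα l β hβ
  have hdegγ : (degE (η + β) : ℤ) + d l = s := by
    rw [degE_add]
    push_cast
    omega
  by_cases hU : η + β ∈ J l
  · obtain ⟨α', hα', δ, hmul, heq⟩ := ((hPB l).1 _).1 hU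
    rw [heq]
    exact hcone hα' hmul ((hPB l).lexLt_of_add_eq hβJ hα' hmul heq)
      (degE_eq_of_add_eq heq hdegγ)
  · exact Submodule.mem_sup_right (Submodule.subset_span ⟨l, η + β, hU, hdegγ, rfl⟩)

lemma termV_add_mem_reductionSpan (hPB : ∀ k, IsPommaretBasis (P k) (J k))
    (hG : IsMarkedSetV d J P g) {s : ℤ} (ε : Exp n) :
    ∀ {k α δ}, α ∈ P k → multExp α δ → lexLt δ ε → (degE δ : ℤ) + degE α + d k = s →
      termV A (α + δ) k ∈ reductionSpan d J P g ε s := by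
  induction ε using wellFounded_lexLt.induction with
  | _ ε ih =>
  intro k α δ hα hmul hδ hdeg
  rw [termV_add_eq (g := g)]
  refine sub_mem (Submodule.mem_sup_left (Submodule.subset_span ⟨k, α, hα, δ, hmul, hδ, hdeg, rfl⟩))
    (reductionSpan_mono hδ ?_)
  exact monomial_smul_tail_mem_reductionSpan hPB hG hα hdeg (ih δ hδ)

theorem homogCompV_le_span_GSdeg_sup (hPB : ∀ k, IsPommaretBasis (P k) (J k))
    (hG : IsMarkedSetV d J P g) (s : ℤ) : homogCompV A d s ≤
    Submodule.span A (GSdeg d P g s) ⊔ Submodule.span A (NUTermsDeg A d J s) := by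
  intro f hf
  refine mem_of_forall_termV_mem f fun l γ hγ => ?_
  by_cases hU : γ ∈ J l
  · obtain ⟨α, hα, δ, hmul, rfl⟩ := ((hPB l).1 _).1 hU
    exact reductionSpan_le (termV_add_mem_reductionSpan hPB hG _ hα hmul
      (lexLt_add_single_zero δ) (degE_eq_of_add_eq rfl (hf l _ hγ)))
  · exact Submodule.mem_sup_right (Submodule.subset_span ⟨l, γ, hU, hf l γ hγ, rfl⟩)

lemma X_smul_mem_reductionSpan (hJ : ∀ k, IsMonomialIdeal (J k))
    (hPB : ∀ k, IsPommaretBasis (P k) (J k)) (hG : IsMarkedSetV d J P g) {k : κ} {α : Exp n}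
    {i : Fin (n+1)} (hα : α ∈ P k) (hnm : ¬ mult α i) :
    monomial (Finsupp.single i 1) (1 : A) • g α k ∈
      reductionSpan d J P g (Finsupp.single i 1) (degE α + d k + 1) := by
  have hcone {l α' δ} := termV_add_mem_reductionSpan (s := degE α + d k + 1) hPB hG
    (Finsupp.single i 1) (k := l) (α := α') (δ := δ)
  have hdeg : (degE (Finsupp.single i 1 + α) : ℤ) + d k = degE α + d k + 1 := by
    rw [degE_add, degE_single_one]
    push_cast
    ring
  rw [← sub_add_cancel (g α k) (termV A α k), smul_add, monomial_smul_termV]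
  refine add_mem (monomial_smul_tail_mem_reductionSpan hPB hG hα (by rw [degE_single_one]; ring)
    hcone) ?_
  obtain ⟨β, hβ, δ, hmul, heq⟩ :=
    ((hPB k).1 _).1 (add_comm α _ ▸ hJ k α ((hPB k).mem hα) (Finsupp.single i 1))
  rw [heq]
  exact hcone hβ hmul ((hPB k).lexLt_single_of_add_eq hα hnm hβ hmul heq)
    (degE_eq_of_add_eq heq hdeg)

end Reduction

section Cancellation

variable {A : Type*} [CommRing A] {κ : Type*} {d : κ → ℤ} {J : κ → Set (Exp n)}
  {P : κ → Finset (Exp n)} {g : Exp n → κ → κ → MvPolynomial (Fin (n+1)) A}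

/-- The triples `(k, α, δ)` indexing the elements `x^δ f_α` of `G^(s)`, with `x^α e_k ∈ P(U)`. -/
def multIndex (d : κ → ℤ) (P : κ → Finset (Exp n)) (s : ℤ) : Set (κ × Exp n × Exp n) :=
  {p | p.2.1 ∈ P p.1 ∧ multExp p.2.1 p.2.2 ∧ (degE p.2.2 : ℤ) + degE p.2.1 + d p.1 = s}

noncomputable def multMultiple (g : Exp n → κ → κ → MvPolynomial (Fin (n+1)) A)
    (p : κ × Exp n × Exp n) : κ → MvPolynomial (Fin (n+1)) A :=
  monomial p.2.2 (1 : A) • g p.2.1 p.1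

lemma GSdeg_eq_image (s : ℤ) : GSdeg d P g s = multMultiple g '' multIndex d P s := by
  ext v
  constructor
  · rintro ⟨k, α, hα, δ, hmul, hdeg, rfl⟩
    exact ⟨(k, α, δ), ⟨hα, hmul, hdeg⟩, rfl⟩
  · rintro ⟨⟨k, α, δ⟩, ⟨hα, hmul, hdeg⟩, rfl⟩
    exact ⟨k, α, hα, δ, hmul, hdeg, rfl⟩

variable [DecidableEq κ]

lemma coeff_multMultiple (hPB : ∀ k, IsPommaretBasis (P k) (J k))
    (hG : IsMarkedSetV d J P g) {s : ℤ} {p q : κ × Exp n × Exp n} (hp : p ∈ multIndex d P s)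
    (hq : q ∈ multIndex d P s) (hpq : ¬ lexLt p.2.2 q.2.2) :
    coeff (p.2.1 + p.2.2) (multMultiple g q p.1) = if q = p then 1 else 0 := by
  obtain ⟨k, α, δ⟩ := p
  obtain ⟨l, β, ε⟩ := q
  obtain ⟨hα, hmulα, -⟩ := hp
  obtain ⟨hβ, hmulβ, -⟩ := hq
  have htail : coeff (α + δ) ((monomial ε (1 : A) • (g β l - termV A β l)) k) = 0 := by
    by_contra hne
    obtain ⟨γ, hγ, heq⟩ := exists_of_mem_support_monomial_mul (mem_support_iff.2 hne)
    exact hpq ((hPB k).lexLt_of_add_eq (hG l β hβ k γ hγ).1 hα hmulα heq.symm)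
  rw [multMultiple, ← sub_add_cancel (g β l) (termV A β l), smul_add, Pi.add_apply, coeff_add,
    htail, zero_add, monomial_smul_termV, coeff_termV]
  congr 1
  apply propext
  constructor
  · rintro ⟨rfl, h⟩
    obtain ⟨rfl, rfl⟩ := (hPB k).eq_of_add_eq hα hβ hmulα hmulβ (h.trans (add_comm _ _))
    rfl
  · intro h
    simp only [Prod.mk.injEq] at h
    obtain ⟨rfl, rfl, rfl⟩ := h
    exact ⟨rfl, add_comm _ _⟩

theorem eq_zero_of_mem_span_GSdeg (hPB : ∀ k, IsPommaretBasis (P k) (J k))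
    (hG : IsMarkedSetV d J P g) {s : ℤ} {h : κ → MvPolynomial (Fin (n+1)) A}
    (hh : h ∈ Submodule.span A (GSdeg d P g s)) (hU : ∀ l, ∀ β ∈ J l, coeff β (h l) = 0) :
    h = 0 := by
  rw [GSdeg_eq_image, Finsupp.mem_span_image_iff_linearCombination] at hh
  obtain ⟨c, hc, rfl⟩ := hh
  by_contra hne
  obtain ⟨p, hp, hmax⟩ := c.support.exists_max_image (fun q => lexKey q.2.2)
    (Finsupp.support_nonempty_iff.2 fun hc0 => hne (by rw [hc0, map_zero]))
  have hpI : p ∈ multIndex d P s := hc hp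
  have hcoeff : coeffV p.1 (p.2.1 + p.2.2) (Finsupp.linearCombination A (multMultiple g) c)
      = c p := by
    rw [Finsupp.linearCombination_apply, map_finsuppSum, Finsupp.sum,
      Finset.sum_eq_single_of_mem p hp]
    · simp [coeffV_apply, coeff_multMultiple hPB hG hpI hpI (lexLt_irrefl _)]
    · intro q hq hqp
      rw [map_smul, coeffV_apply, coeff_multMultiple hPB hG hpI (hc hq)
        (by rw [lexLt_iff_lexKey_lt]; exact not_lt.2 (hmax q hq)), if_neg hqp, smul_zero]
  exact Finsupp.mem_support_iff.1 hp
    (hcoeff.symm.trans (hU _ _ ((hPB _).add_mem hpI.1 hpI.2.1)))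

theorem span_GSdeg_inf_span_NUTermsDeg [Fintype κ] (hPB : ∀ k, IsPommaretBasis (P k) (J k))
    (hG : IsMarkedSetV d J P g) (s : ℤ) :
    Submodule.span A (GSdeg d P g s) ⊓ Submodule.span A (NUTermsDeg A d J s) = ⊥ :=
  eq_bot_iff.2 fun _ ⟨hGs, hN⟩ => eq_zero_of_mem_span_GSdeg hPB hG hGs fun _ _ hβ =>
    coeff_eq_zero_of_mem_span_NUTerms (span_NUTermsDeg_le_span_NUTerms s hN) hβ

end Cancellation

section Projection

variable {A : Type*} [CommRing A] {κ : Type*} {d : κ → ℤ}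

lemma weight_one_eq_degE (β : Exp n) : Finsupp.weight (1 : Fin (n+1) → ℤ) β = degE β := by
  simp [Finsupp.weight_apply, degE, Finsupp.sum]

noncomputable def homogProj (d : κ → ℤ) (s : ℤ) :
    (κ → MvPolynomial (Fin (n+1)) A) →ₗ[A] (κ → MvPolynomial (Fin (n+1)) A) :=
  LinearMap.pi fun k =>
    (weightedHomogeneousComponent (1 : Fin (n+1) → ℤ) (s - d k)).comp (LinearMap.proj k)

lemma coeff_homogProj (s : ℤ) (f : κ → MvPolynomial (Fin (n+1)) A) (k : κ) (β : Exp n) :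
    coeff β (homogProj d s f k) = if (degE β : ℤ) + d k = s then coeff β (f k) else 0 := by
  simp only [homogProj, LinearMap.pi_apply, LinearMap.comp_apply, LinearMap.proj_apply,
    coeff_weightedHomogeneousComponent, weight_one_eq_degE]
  congr 1
  apply propext
  omega

lemma homogProj_of_mem {s t : ℤ} {f : κ → MvPolynomial (Fin (n+1)) A}
    (hf : f ∈ homogCompV A d t) : homogProj d s f = if t = s then f else 0 := by
  funext k
  ext β
  rw [coeff_homogProj]
  by_cases hβ : β ∈ (f k).support
  · have := hf k β hβ
    split_ifs <;> first | rfl | omega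
  · rw [notMem_support_iff.1 hβ]
    split_ifs <;> simp_all

variable [DecidableEq κ] {J : κ → Set (Exp n)} {P : κ → Finset (Exp n)}
  {g : Exp n → κ → κ → MvPolynomial (Fin (n+1)) A}

lemma GmodDeg_le_span_GSdeg_of_forall (hG : IsMarkedSetV d J P g) {s : ℤ}
    (hprod : ∀ (γ : Exp n) k, ∀ α ∈ P k, (degE γ : ℤ) + degE α + d k = s →
      monomial γ (1 : A) • g α k ∈ Submodule.span A (GSdeg d P g s)) :
    GmodDeg d P g s ≤ Submodule.span A (GSdeg d P g s) := by
  rintro h ⟨hGh, hh⟩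
  rw [SetLike.mem_coe, GmodS, ← Submodule.span_smul_of_span_eq_top span_range_monomial_one] at hGh
  have hproj := Submodule.mem_map_of_mem (f := homogProj d s) hGh
  rw [homogProj_of_mem hh, if_pos rfl, Submodule.map_span] at hproj
  refine Submodule.span_le.2 ?_ hproj
  rintro _ ⟨_, ⟨_, ⟨γ, rfl⟩, _, ⟨k, α, hα, rfl⟩, rfl⟩, rfl⟩
  rw [homogProj_of_mem (monomial_smul_mem_homogCompV (hG.mem_homogCompV hα) γ)]
  split_ifs with hdeg
  · exact hprod γ k α hα (by rw [← hdeg]; ring)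
  · exact zero_mem _

end Projection

section Prolongation

variable {A : Type*} [CommRing A] {κ : Type*} [Fintype κ] [DecidableEq κ] {d : κ → ℤ}
  {J : κ → Set (Exp n)} {P : κ → Finset (Exp n)}
  {g : Exp n → κ → κ → MvPolynomial (Fin (n+1)) A}

lemma X_smul_mem_span_GSdegLT (hJ : ∀ k, IsMonomialIdeal (J k))
    (hPB : ∀ k, IsPommaretBasis (P k) (J k)) (hG : IsMarkedSetV d J P g) {k : κ} {α : Exp n}
    {i : Fin (n+1)} (hα : α ∈ P k) (hnm : ¬ mult α i)
    (hvan : GmodDeg d P g (degE α + d k + 1) ⊓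
      Submodule.span A (NUTermsDeg A d J (degE α + d k + 1)) = ⊥) :
    monomial (Finsupp.single i 1) (1 : A) • g α k ∈
      Submodule.span A (GSdegLT d P g (Finsupp.single i 1) (degE α + d k + 1)) := by
  obtain ⟨u, hu, w, hw, huw⟩ := Submodule.mem_sup.1 (X_smul_mem_reductionSpan hJ hPB hG hα hnm)
  have hXg : monomial (Finsupp.single i 1) (1 : A) • g α k ∈ GmodDeg d P g (degE α + d k + 1) := by
    refine ⟨(GmodS P g).smul_mem _ (Submodule.subset_span ⟨k, α, hα, rfl⟩), ?_⟩
    have := monomial_smul_mem_homogCompV (hG.mem_homogCompV hα) (Finsupp.single i 1)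
    rwa [degE_single_one, Nat.cast_one, add_comm 1] at this
  have hu' := span_GSdeg_le_GmodDeg hG _ (Submodule.span_mono GSdegLT_subset_GSdeg hu)
  -- the remainder `w` of the reduction lies in `N(U, ⟨G⟩)`
  have hw0 : w ∈ GmodDeg d P g (degE α + d k + 1) ⊓
      Submodule.span A (NUTermsDeg A d J (degE α + d k + 1)) :=
    ⟨eq_sub_of_add_eq' huw ▸ sub_mem hXg hu', hw⟩
  rw [hvan, Submodule.mem_bot] at hw0
  rwa [← huw, hw0, add_zero]

theorem monomial_smul_mem_span_GSdeg (hJ : ∀ k, IsMonomialIdeal (J k))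
    (hPB : ∀ k, IsPommaretBasis (P k) (J k))
    (hG : IsMarkedSetV d J P g)
    (hvan : ∀ k, ∀ α ∈ P k, GmodDeg d P g (degE α + d k + 1) ⊓
      Submodule.span A (NUTermsDeg A d J (degE α + d k + 1)) = ⊥) {s : ℤ} (γ : Exp n) :
    ∀ {k α}, α ∈ P k → (degE γ : ℤ) + degE α + d k = s →
      monomial γ (1 : A) • g α k ∈ Submodule.span A (GSdeg d P g s) := by
  induction γ using wellFounded_lexLt.induction with
  | _ γ ih =>
  intro k α hα hdeg
  by_cases hmul : multExp α γ
  · exact Submodule.subset_span ⟨k, α, hα, γ, hmul, hdeg, rfl⟩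
  obtain ⟨i, hi, hnm⟩ : ∃ i ∈ γ.support, ¬ mult α i := by simpa [multExp] using hmul
  obtain ⟨γ₀, rfl⟩ : ∃ γ₀, γ = γ₀ + Finsupp.single i 1 := ⟨_, (tsub_add_cancel_of_le
    (Finsupp.single_le_iff.2 (Nat.one_le_iff_ne_zero.2 (Finsupp.mem_support_iff.1 hi)))).symm⟩
  rw [← mul_one (1 : A), ← monomial_mul, mul_smul]
  refine smul_mem_of_forall_mem_span _ ?_ (X_smul_mem_span_GSdegLT hJ hPB hG hα hnm (hvan k α hα))
  rintro _ ⟨l, α', hα', δ, -, hδ, hdeg', rfl⟩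
  rw [smul_smul, monomial_mul, one_mul]
  refine ih _ (lexLt_add_left γ₀ hδ) hα' ?_
  rw [degE_add] at hdeg ⊢
  rw [degE_single_one] at hdeg
  push_cast at hdeg ⊢
  omega

theorem GmodDeg_le_span_GSdeg (hJ : ∀ k, IsMonomialIdeal (J k))
    (hPB : ∀ k, IsPommaretBasis (P k) (J k))
    (hG : IsMarkedSetV d J P g)
    (hvan : ∀ k, ∀ α ∈ P k, GmodDeg d P g (degE α + d k + 1) ⊓
      Submodule.span A (NUTermsDeg A d J (degE α + d k + 1)) = ⊥) (s : ℤ) :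
    GmodDeg d P g s ≤ Submodule.span A (GSdeg d P g s) :=
  GmodDeg_le_span_GSdeg_of_forall hG fun γ _ _ hα hdeg =>
    monomial_smul_mem_span_GSdeg hJ hPB hG hvan γ hα hdeg

end Prolongation

theorem statement9_general {n : ℕ} {κ : Type*} [Fintype κ] [DecidableEq κ]
    {A : Type*} [CommRing A]
    (d : κ → ℤ) (J : κ → Set (Exp n)) (P : κ → Finset (Exp n))
    (hQS : ∀ k, IsMonomialIdeal (J k) ∧ IsPommaretBasis (P k) (J k))
    (gb : Exp n → κ → (κ → MvPolynomial (Fin (n+1)) A))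
    (hG : IsMarkedSetV d J P gb)
    (r : ℤ) (hub : ∀ k, ∀ α ∈ P k, (degE α : ℤ) + d k ≤ r) :
    (MarkedBasisProp d J P gb ↔
      ∀ s : ℤ, s ≤ r + 1 →
        (GmodS P gb).restrictScalars A ⊓ Submodule.span A (NUTerms A J)
          ⊓ homogCompV A d s = ⊥) ∧
    ((∀ s : ℤ, s ≤ r + 1 →
        (GmodS P gb).restrictScalars A ⊓ Submodule.span A (NUTerms A J)
          ⊓ homogCompV A d s = ⊥) ↔
      (∀ s : ℤ, s ≤ r + 1 →
        GmodDeg d P gb s = Submodule.span A (GSdeg d P gb s))) := by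
  have hJ k := (hQS k).1
  have hPB k := (hQS k).2
  simp only [inf_span_NUTerms_inf_homogCompV]
  have hGmodDeg (hvan : ∀ s ≤ r + 1, GmodDeg d P gb s ⊓
      Submodule.span A (NUTermsDeg A d J s) = ⊥) (s : ℤ) :
      GmodDeg d P gb s = Submodule.span A (GSdeg d P gb s) :=
    le_antisymm
      (GmodDeg_le_span_GSdeg hJ hPB hG (fun k α hα => hvan _ (by linarith [hub k α hα])) s)
      (span_GSdeg_le_GmodDeg hG s)
  refine ⟨⟨fun hMB s _ => (hMB s).2, fun hvan s => ?_⟩,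
    ⟨fun hvan s _ => hGmodDeg hvan s, fun hspan s hs => ?_⟩⟩
  · rw [hGmodDeg hvan s]
    refine ⟨le_antisymm (homogCompV_le_span_GSdeg_sup hPB hG s)
      (sup_le ((span_GSdeg_le_GmodDeg hG s).trans inf_le_right)
        (span_NUTermsDeg_le_homogCompV s)), span_GSdeg_inf_span_NUTermsDeg hPB hG s⟩
  · rw [hspan s hs]
    exact span_GSdeg_inf_span_NUTermsDeg hPB hG s

/-- Corollary `finiteCond`: it suffices to check the marked-basis conditions
in degrees `s ≤ reg(U) + 1`, where `reg(U)` is the maximal degree of an element of `P(U)`. -/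
theorem statement9 {n : ℕ} {κ : Type*} [Fintype κ] [DecidableEq κ] (hm : Nonempty κ)
    {A : Type*} [CommRing A] [IsNoetherianRing A]
    (d : κ → ℤ) (J : κ → Set (Exp n)) (P : κ → Finset (Exp n))
    (hQS : ∀ k, IsMonomialIdeal (J k) ∧ IsPommaretBasis (P k) (J k))
    (gb : Exp n → κ → (κ → MvPolynomial (Fin (n+1)) A))
    (hG : IsMarkedSetV d J P gb)
    (r : ℤ) (hub : ∀ k, ∀ α ∈ P k, (degE α : ℤ) + d k ≤ r)
    (hatt : ∃ k, ∃ α ∈ P k, (degE α : ℤ) + d k = r) :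
    (MarkedBasisProp d J P gb ↔
      ∀ s : ℤ, s ≤ r + 1 →
        (GmodS P gb).restrictScalars A ⊓ Submodule.span A (NUTerms A J)
          ⊓ homogCompV A d s = ⊥) ∧
    ((∀ s : ℤ, s ≤ r + 1 →
        (GmodS P gb).restrictScalars A ⊓ Submodule.span A (NUTerms A J)
          ⊓ homogCompV A d s = ⊥) ↔
      (∀ s : ℤ, s ≤ r + 1 →
        GmodDeg d P gb s = Submodule.span A (GSdeg d P gb s))) :=
  statement9_general d J P hQS gb hG r hub

end MB
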